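/- (Miura transformation) Let Ω ⊆ ℂ × ℂ be open and let x : Ω → ℂ be holomorphic in both variables (z, t), satisfying ∂x/∂t = −( ∂³x/∂z³ − (3/2)·x²·(∂x/∂z) ) on Ω. Then the function u := (1/2)·(∂x/∂z) − (1/4)·x² satisfies the KdV equation ∂u/∂t = −∂³u/∂z³ − 6·u·(∂u/∂z) on Ω. -/

import Mathlib

open Complex

/-- Partial derivative in the first (space, `z`) variable of a function on `ℂ × ℂ`. -/
noncomputable def dz (f : ℂ × ℂ → ℂ) (p : ℂ × ℂ) : ℂ := fderiv ℂ f p (1, 0)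

/-- Partial derivative in the second (time, `t`) variable of a function on `ℂ × ℂ`. -/
noncomputable def dt (f : ℂ × ℂ → ℂ) (p : ℂ × ℂ) : ℂ := fderiv ℂ f p (0, 1)

/-!
Miura's identity: for `u = ½ x_z − ¼ x²`,
`u_t + u_zzz + 6 u u_z = ½ (∂_z − x) (x_t + x_zzz − (3/2) x² x_z)`.
It is a polynomial identity in `x` and its partial derivatives once `∂_t ∂_z x = ∂_z ∂_t x`,
which holds by symmetry of the second derivative of a holomorphic function. The mKdV residual
vanishes on the open set `Ω`, hence so does its `z`-derivative, and with it the KdV residual of `u`.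
-/

open Set

section Rules

variable {f g : ℂ × ℂ → ℂ} {p : ℂ × ℂ}

theorem dz_const (c : ℂ) : dz (fun _ => c) p = 0 := by
  simp [dz]

theorem dz_add (hf : DifferentiableAt ℂ f p) (hg : DifferentiableAt ℂ g p) :
    dz (fun q => f q + g q) p = dz f p + dz g p := by
  simp [dz, fderiv_fun_add hf hg]

theorem dz_sub (hf : DifferentiableAt ℂ f p) (hg : DifferentiableAt ℂ g p) :
    dz (fun q => f q - g q) p = dz f p - dz g p := by
  simp [dz, fderiv_fun_sub hf hg]

theorem dz_const_mul (hf : DifferentiableAt ℂ f p) (c : ℂ) :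
    dz (fun q => c * f q) p = c * dz f p := by
  simp [dz, fderiv_const_mul hf]

theorem dz_mul (hf : DifferentiableAt ℂ f p) (hg : DifferentiableAt ℂ g p) :
    dz (fun q => f q * g q) p = dz f p * g p + f p * dz g p := by
  simp [dz, fderiv_fun_mul hf hg]; ring

theorem dz_pow (hf : DifferentiableAt ℂ f p) (n : ℕ) :
    dz (fun q => f q ^ n) p = n * f p ^ (n - 1) * dz f p := by
  simp [dz, fderiv_fun_pow n hf]

theorem dt_sub (hf : DifferentiableAt ℂ f p) (hg : DifferentiableAt ℂ g p) :
    dt (fun q => f q - g q) p = dt f p - dt g p := by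
  simp [dt, fderiv_fun_sub hf hg]

theorem dt_const_mul (hf : DifferentiableAt ℂ f p) (c : ℂ) :
    dt (fun q => c * f q) p = c * dt f p := by
  simp [dt, fderiv_const_mul hf]

theorem dt_pow (hf : DifferentiableAt ℂ f p) (n : ℕ) :
    dt (fun q => f q ^ n) p = n * f p ^ (n - 1) * dt f p := by
  simp [dt, fderiv_fun_pow n hf]

theorem Set.EqOn.dz {Ω : Set (ℂ × ℂ)} (hΩ : IsOpen Ω) (h : EqOn f g Ω) :
    EqOn (dz f) (dz g) Ω := fun _ hq => by
  rw [_root_.dz, Filter.EventuallyEq.fderiv_eq (Filter.eventually_of_mem (hΩ.mem_nhds hq) h), _root_.dz]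

end Rules

section Analytic

variable {f : ℂ × ℂ → ℂ} {p : ℂ × ℂ}

theorem AnalyticAt.dz (hf : AnalyticAt ℂ f p) : AnalyticAt ℂ (dz f) p :=
  ((ContinuousLinearMap.apply ℂ ℂ ((1 : ℂ), (0 : ℂ))).analyticAt _).comp hf.fderiv

theorem AnalyticAt.dt (hf : AnalyticAt ℂ f p) : AnalyticAt ℂ (dt f) p :=
  ((ContinuousLinearMap.apply ℂ ℂ ((0 : ℂ), (1 : ℂ))).analyticAt _).comp hf.fderiv

theorem dt_dz_comm (hf : AnalyticAt ℂ f p) : dt (dz f) p = dz (dt f) p := by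
  have hd : DifferentiableAt ℂ (fderiv ℂ f) p := hf.fderiv.differentiableAt
  change fderiv ℂ (fun q => fderiv ℂ f q (1, 0)) p (0, 1)
    = fderiv ℂ (fun q => fderiv ℂ f q (0, 1)) p (1, 0)
  simp only [fderiv_clm_apply hd (differentiableAt_const _), fderiv_fun_const, Pi.zero_apply,
    ContinuousLinearMap.comp_zero, zero_add, ContinuousLinearMap.flip_apply]
  exact (hf.contDiffAt.isSymmSndFDerivAt (n := 2)
    (by simp [minSmoothness_of_isRCLikeNormedField])).eq _ _

end Analytic

noncomputable def miura (x : ℂ × ℂ → ℂ) : ℂ × ℂ → ℂ := fun q =>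
  1 / 2 * dz x q - 1 / 4 * x q ^ 2

noncomputable def mkdvResidual (x : ℂ × ℂ → ℂ) : ℂ × ℂ → ℂ := fun q =>
  dt x q + dz (dz (dz x)) q - 3 / 2 * x q ^ 2 * dz x q

noncomputable def kdvResidual (u : ℂ × ℂ → ℂ) : ℂ × ℂ → ℂ := fun q =>
  dt u q + dz (dz (dz u)) q + 6 * u q * dz u q

section Miura

variable {x : ℂ × ℂ → ℂ} {p : ℂ × ℂ} {Ω : Set (ℂ × ℂ)}

theorem dz_miura (hx : AnalyticAt ℂ x p) :
    dz (miura x) p = 1 / 2 * (dz (dz x) p - x p * dz x p) := by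
  have := hx.differentiableAt
  have := hx.dz.differentiableAt
  unfold miura
  simp (disch := fun_prop) only [dz_sub, dz_const_mul, dz_pow]
  ring

theorem dz_dz_miura (hΩ : IsOpen Ω) (hx : AnalyticOnNhd ℂ x Ω) (hp : p ∈ Ω) :
    dz (dz (miura x)) p = 1 / 2 * (dz (dz (dz x)) p - dz x p ^ 2 - x p * dz (dz x) p) := by
  have hxp := hx p hp
  have := hxp.differentiableAt
  have := hxp.dz.differentiableAt
  have := hxp.dz.dz.differentiableAt
  rw [Set.EqOn.dz hΩ (fun q hq => dz_miura (hx q hq)) hp]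
  simp (disch := fun_prop) only [dz_sub, dz_mul, dz_const]
  ring

theorem dz_dz_dz_miura (hΩ : IsOpen Ω) (hx : AnalyticOnNhd ℂ x Ω) (hp : p ∈ Ω) :
    dz (dz (dz (miura x))) p
      = 1 / 2 * (dz (dz (dz (dz x))) p - 3 * dz x p * dz (dz x) p - x p * dz (dz (dz x)) p) := by
  have hxp := hx p hp
  have := hxp.differentiableAt
  have := hxp.dz.differentiableAt
  have := hxp.dz.dz.differentiableAt
  have := hxp.dz.dz.dz.differentiableAt
  rw [Set.EqOn.dz hΩ (fun q hq => dz_dz_miura hΩ hx hq) hp]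
  simp (disch := fun_prop) only [dz_sub, dz_mul, dz_pow, dz_const]
  ring

theorem dt_miura (hx : AnalyticAt ℂ x p) :
    dt (miura x) p = 1 / 2 * (dt (dz x) p - x p * dt x p) := by
  have := hx.differentiableAt
  have := hx.dz.differentiableAt
  unfold miura
  simp (disch := fun_prop) only [dt_sub, dt_const_mul, dt_pow]
  ring

theorem dz_mkdvResidual (hx : AnalyticAt ℂ x p) :
    dz (mkdvResidual x) p = dt (dz x) p + dz (dz (dz (dz x))) p
      - 3 * x p * dz x p ^ 2 - 3 / 2 * x p ^ 2 * dz (dz x) p := by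
  have := hx.differentiableAt
  have := hx.dz.differentiableAt
  have := hx.dz.dz.differentiableAt
  have := hx.dz.dz.dz.differentiableAt
  have := hx.dt.differentiableAt
  unfold mkdvResidual
  simp (disch := fun_prop) only [dz_add, dz_sub, dz_mul, dz_pow, dz_const]
  rw [dt_dz_comm hx]
  ring

theorem kdvResidual_miura (hΩ : IsOpen Ω) (hx : AnalyticOnNhd ℂ x Ω) (hp : p ∈ Ω) :
    kdvResidual (miura x) p = 1 / 2 * (dz (mkdvResidual x) p - x p * mkdvResidual x p) := by
  rw [kdvResidual, dt_miura (hx p hp), dz_dz_dz_miura hΩ hx hp, dz_miura (hx p hp),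
    dz_mkdvResidual (hx p hp), mkdvResidual, miura]
  ring

end Miura

/-- Miura transformation: if a holomorphic `x(z,t)` satisfies the mKdV-type equation
`∂x/∂t = −(x''' − (3/2) x² x')`, then `u = (1/2) x' − (1/4) x²` satisfies the KdV
equation `∂u/∂t = −u''' − 6 u u'`. -/
theorem miura_transformation_mkdv_to_kdv
    (Ω : Set (ℂ × ℂ)) (hΩ : IsOpen Ω) (x : ℂ × ℂ → ℂ)
    (hx : AnalyticOnNhd ℂ x Ω)
    (hev : ∀ p ∈ Ω,
      dt x p = -(dz (dz (dz x)) p - (3 / 2) * (x p) ^ 2 * dz x p)) :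
    ∀ p ∈ Ω,
      dt (fun q => (1 / 2) * dz x q - (1 / 4) * (x q) ^ 2) p
        = -(dz (dz (dz (fun q => (1 / 2) * dz x q - (1 / 4) * (x q) ^ 2))) p)
          - 6 * ((1 / 2) * dz x p - (1 / 4) * (x p) ^ 2)
            * dz (fun q => (1 / 2) * dz x q - (1 / 4) * (x q) ^ 2) p := by
  intro p hp
  change dt (miura x) p = -dz (dz (dz (miura x))) p - 6 * miura x p * dz (miura x) p
  have hmkdv : EqOn (mkdvResidual x) (fun _ => 0) Ω := fun q hq => by
    simp only [mkdvResidual, hev q hq]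
    ring
  have hkdv : kdvResidual (miura x) p = 0 := by
    rw [kdvResidual_miura hΩ hx hp, hmkdv.dz hΩ hp, hmkdv hp, dz_const]
    ring
  rw [kdvResidual] at hkdv
  linear_combination hkdv
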